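/- Let (X,ρ,W) be a hyperbolic space, C ⊆ X a convex subset with the UAFPP for nonexpansive functions, and (M,d) a bounded metric space with the AFPP for nonexpansive functions. Then H := (C × M)_∞ has the AFPP for nonexpansive functions. -/

import Mathlib

open Metric Set

/-- Krasnoselski-Mann iteration: x₀ := x, x_{n+1} := W(x_n, T(x_n), λ_n). -/
def KM {X : Type*} (W : X → X → ℝ → X) (T : X → X) (lam : ℕ → ℝ) (x : X) : ℕ → X
  | 0 => x
  | n + 1 => W (KM W T lam x n) (T (KM W T lam x n)) (lam n)

/-- M has the approximate fixed point property for nonexpansive mappings. -/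
def AFPP (M : Type*) [MetricSpace M] : Prop :=
  ∀ S : M → M, (∀ u v : M, dist (S u) (S v) ≤ dist u v) →
    sInf {r : ℝ | ∃ u : M, r = dist u (S u)} = 0

/-- C has the uniform approximate fixed point property for nonexpansive self-maps. -/
def UAFPP {X : Type*} [MetricSpace X] (C : Set X) : Prop :=
  ∀ ε > (0:ℝ), ∀ b > (0:ℝ), ∃ D > (0:ℝ), ∀ x ∈ C, ∀ S : X → X,
    (∀ y ∈ C, S y ∈ C) → (∀ y ∈ C, ∀ z ∈ C, dist (S y) (S z) ≤ dist y z) →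
    dist x (S x) ≤ b →
    ∃ xstar ∈ C, dist x xstar ≤ D ∧ dist xstar (S xstar) ≤ ε

/-!
For `δ ∈ (0, 1]` the anchored map `y ↦ W(S y, x₀, δ)` is a `(1 - δ)`-contraction, so its iterates
`y_n` from `x₀` move by at most `(1 - δ)^(n+1) ρ(x₀, S x₀)` per step and depend nonexpansively on
`S`. The UAFPP provides an `ε`-fixed point `p` of `S` with `ρ(x₀, p) ≤ D`, `D` depending only on
`ε` and a bound `b` for `ρ(x₀, S x₀)`; the iterates stay within `D + ε/δ` of `p`, which gives
`ρ(y_n, S y_n) ≤ (1 - δ)^n b + δ (2D + ε) + ε`, small uniformly in `S` once `δ` and then `n` are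
fixed.

Applied to the slices `T(·, u)` of `T`, which share the bound `b = ρ(x₀, T(x₀, u₀)) + diam M`,
this yields a nonexpansive choice `u ↦ y(u)` of approximate fixed points. The AFPP of `M`, applied
to the nonexpansive map `u ↦ (T(y(u), u)).2`, then produces an approximate fixed point of `T`.
-/

section AnchoredIterate

variable {X : Type*} {W : X → X → ℝ → X} {C : Set X} {x₀ : X} {δ : ℝ} {S : X → X}

def anchoredIterate (W : X → X → ℝ → X) (x₀ : X) (δ : ℝ) (S : X → X) (n : ℕ) : X :=
  (fun y => W (S y) x₀ δ)^[n] x₀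

@[simp]
lemma anchoredIterate_zero : anchoredIterate W x₀ δ S 0 = x₀ := rfl

lemma anchoredIterate_succ (n : ℕ) :
    anchoredIterate W x₀ δ S (n + 1) = W (S (anchoredIterate W x₀ δ S n)) x₀ δ :=
  Function.iterate_succ_apply' _ _ _

lemma anchoredIterate_mem (hconv : ∀ x ∈ C, ∀ y ∈ C, ∀ l ∈ Icc (0:ℝ) 1, W x y l ∈ C)
    (hx₀ : x₀ ∈ C) (hδ : δ ∈ Icc (0:ℝ) 1) (hS : MapsTo S C C) (n : ℕ) :
    anchoredIterate W x₀ δ S n ∈ C := by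
  induction n with
  | zero => exact hx₀
  | succ n ih => rw [anchoredIterate_succ]; exact hconv _ (hS ih) _ hx₀ _ hδ

variable [MetricSpace X]

lemma dist_W_anchor_le
    (hW4 : ∀ x y z w : X, ∀ l ∈ Icc (0:ℝ) 1,
      dist (W x z l) (W y w l) ≤ (1 - l) * dist x y + l * dist z w)
    (hδ : δ ∈ Icc (0:ℝ) 1) (p q : X) :
    dist (W p x₀ δ) (W q x₀ δ) ≤ (1 - δ) * dist p q := by
  simpa using hW4 p q x₀ x₀ δ hδ

lemma dist_anchoredIterate_le_of_forall_dist_le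
    (hW4 : ∀ x y z w : X, ∀ l ∈ Icc (0:ℝ) 1,
      dist (W x z l) (W y w l) ≤ (1 - l) * dist x y + l * dist z w)
    (hconv : ∀ x ∈ C, ∀ y ∈ C, ∀ l ∈ Icc (0:ℝ) 1, W x y l ∈ C)
    (hx₀ : x₀ ∈ C) (hδ : δ ∈ Icc (0:ℝ) 1) {S' : X → X} (hS : MapsTo S C C)
    (hS' : MapsTo S' C C) {r : ℝ} (hr : 0 ≤ r)
    (hSS' : ∀ y ∈ C, ∀ y' ∈ C, dist (S y) (S' y') ≤ max (dist y y') r) (n : ℕ) :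
    dist (anchoredIterate W x₀ δ S n) (anchoredIterate W x₀ δ S' n) ≤ r := by
  induction n with
  | zero => simpa using hr
  | succ n ih =>
    have hSn := hSS' _ (anchoredIterate_mem hconv hx₀ hδ hS n) _
      (anchoredIterate_mem hconv hx₀ hδ hS' n)
    rw [max_eq_right ih] at hSn
    rw [anchoredIterate_succ, anchoredIterate_succ]
    calc _ ≤ (1 - δ) * dist (S (anchoredIterate W x₀ δ S n)) (S' (anchoredIterate W x₀ δ S' n)) :=
          dist_W_anchor_le hW4 hδ _ _
      _ ≤ 1 * r := mul_le_mul (by linarith [hδ.1]) hSn dist_nonneg zero_le_one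
      _ = r := one_mul r

section Nonexpansive

variable (hW1 : ∀ x y z : X, ∀ l ∈ Icc (0:ℝ) 1,
      dist z (W x y l) ≤ (1 - l) * dist z x + l * dist z y)
    (hconv : ∀ x ∈ C, ∀ y ∈ C, ∀ l ∈ Icc (0:ℝ) 1, W x y l ∈ C)
    (hx₀ : x₀ ∈ C) (hδ : δ ∈ Icc (0:ℝ) 1) (hSC : MapsTo S C C)
    (hS : ∀ y ∈ C, ∀ z ∈ C, dist (S y) (S z) ≤ dist y z)
include hW1 hconv hx₀ hδ hSC hS

lemma dist_anchoredIterate_succ_le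
    (hW4 : ∀ x y z w : X, ∀ l ∈ Icc (0:ℝ) 1,
      dist (W x z l) (W y w l) ≤ (1 - l) * dist x y + l * dist z w) (n : ℕ) :
    dist (anchoredIterate W x₀ δ S n) (anchoredIterate W x₀ δ S (n + 1)) ≤
      (1 - δ) ^ (n + 1) * dist x₀ (S x₀) := by
  induction n with
  | zero => simpa [anchoredIterate_succ] using hW1 (S x₀) x₀ x₀ δ hδ
  | succ n ih =>
    have hmem := anchoredIterate_mem hconv hx₀ hδ hSC
    rw [anchoredIterate_succ, anchoredIterate_succ (n + 1), pow_succ']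
    calc _ ≤ (1 - δ) *
            dist (S (anchoredIterate W x₀ δ S n)) (S (anchoredIterate W x₀ δ S (n + 1))) :=
          dist_W_anchor_le hW4 hδ _ _
      _ ≤ (1 - δ) * ((1 - δ) ^ (n + 1) * dist x₀ (S x₀)) :=
          mul_le_mul_of_nonneg_left ((hS _ (hmem n) _ (hmem (n + 1))).trans ih)
            (by linarith [hδ.2])
      _ = _ := by ring

lemma mul_dist_anchoredIterate_le {p : X} (hp : p ∈ C) (n : ℕ) :
    δ * dist p (anchoredIterate W x₀ δ S n) ≤ δ * dist p x₀ + dist p (S p) := by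
  induction n with
  | zero => simp
  | succ n ih =>
    rw [anchoredIterate_succ]
    set y := anchoredIterate W x₀ δ S n
    have hSp : dist p (S y) ≤ dist p (S p) + dist p y :=
      calc dist p (S y) ≤ dist p (S p) + dist (S p) (S y) := dist_triangle _ _ _
        _ ≤ dist p (S p) + dist p y :=
          add_le_add_right (hS _ hp _ (anchoredIterate_mem hconv hx₀ hδ hSC n)) _
    obtain ⟨hδ0, hδ1⟩ := hδ
    have h1δ : 0 ≤ 1 - δ := sub_nonneg.2 hδ1
    nlinarith [mul_le_mul_of_nonneg_left (hW1 (S y) x₀ p δ ⟨hδ0, hδ1⟩) hδ0,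
      mul_le_mul_of_nonneg_left hSp (mul_nonneg hδ0 h1δ), mul_le_mul_of_nonneg_left ih h1δ,
      mul_nonneg (mul_nonneg hδ0 hδ0) (dist_nonneg (x := p) (y := S p))]

end Nonexpansive

theorem UAFPP.exists_dist_anchoredIterate_le (hCU : UAFPP C)
    (hW1 : ∀ x y z : X, ∀ l ∈ Icc (0:ℝ) 1,
      dist z (W x y l) ≤ (1 - l) * dist z x + l * dist z y)
    (hW4 : ∀ x y z w : X, ∀ l ∈ Icc (0:ℝ) 1,
      dist (W x z l) (W y w l) ≤ (1 - l) * dist x y + l * dist z w)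
    (hconv : ∀ x ∈ C, ∀ y ∈ C, ∀ l ∈ Icc (0:ℝ) 1, W x y l ∈ C)
    (hx₀ : x₀ ∈ C) (b : ℝ) {ε : ℝ} (hε : 0 < ε) :
    ∃ δ ∈ Icc (0:ℝ) 1, ∃ n : ℕ, ∀ S : X → X, MapsTo S C C →
      (∀ y ∈ C, ∀ z ∈ C, dist (S y) (S z) ≤ dist y z) → dist x₀ (S x₀) ≤ b →
      dist (anchoredIterate W x₀ δ S n) (S (anchoredIterate W x₀ δ S n)) ≤ ε := by
  set e := ε / 3
  obtain ⟨D, hD, hCU⟩ := hCU e (by positivity) (max b 1) (by positivity)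
  set δ := e / (2 * D + e)
  have hδ0 : 0 < δ := by positivity
  have hδ : δ ∈ Icc (0:ℝ) 1 := ⟨hδ0.le, div_le_one_of_le₀ (by linarith) (by positivity)⟩
  have hδD : δ * (2 * D + e) = e := div_mul_cancel₀ _ (by positivity)
  obtain ⟨n, hn⟩ := exists_pow_lt_of_lt_one (show 0 < e / max b 1 by positivity)
    (show 1 - δ < 1 by linarith)
  rw [lt_div_iff₀ (by positivity)] at hn
  refine ⟨δ, hδ, n, fun S hSC hS hb => ?_⟩
  obtain ⟨p, hp, hx₀p, hpS⟩ :=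
    hCU x₀ hx₀ S (fun y hy => hSC hy) hS (hb.trans (le_max_left _ _))
  set y := anchoredIterate W x₀ δ S
  have hstep : dist (y n) (y (n + 1)) ≤ e := by
    refine (dist_anchoredIterate_succ_le hW1 hconv hx₀ hδ hSC hS hW4 n).trans (le_trans ?_ hn.le)
    rw [pow_succ, mul_assoc]
    refine mul_le_mul_of_nonneg_left ?_ (pow_nonneg (by linarith [hδ.2]) n)
    nlinarith [le_max_left b 1, mul_nonneg hδ.1 (dist_nonneg (x := x₀) (y := S x₀))]
  have hdrift := mul_dist_anchoredIterate_le hW1 hconv hx₀ hδ hSC hS hp n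
  have hpull : dist (y (n + 1)) (S (y n)) ≤ δ * dist (S (y n)) x₀ := by
    rw [dist_comm]
    simpa [y, anchoredIterate_succ] using hW1 (S (y n)) x₀ (S (y n)) δ hδ
  have hSx₀ : dist (S (y n)) x₀ ≤ dist p (y n) + e + D :=
    calc dist (S (y n)) x₀ ≤ dist (S (y n)) (S p) + dist (S p) p + dist p x₀ :=
          dist_triangle4 _ _ _ _
      _ ≤ dist p (y n) + e + D := by
        rw [dist_comm (S (y n)) (S p), dist_comm (S p) p, dist_comm p x₀]
        exact add_le_add (add_le_add (hS _ hp _ (anchoredIterate_mem hconv hx₀ hδ hSC n)) hpS) hx₀p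
  calc dist (y n) (S (y n)) ≤ dist (y n) (y (n + 1)) + dist (y (n + 1)) (S (y n)) :=
        dist_triangle _ _ _
    _ ≤ e + (e + δ * (2 * D + e)) := by
        rw [dist_comm p x₀] at hdrift
        nlinarith [mul_le_mul_of_nonneg_left hSx₀ hδ.1, mul_le_mul_of_nonneg_left hx₀p hδ.1]
    _ = ε := by rw [hδD]; ring

theorem UAFPP.exists_nonexpansive_approxFixedPoints {M : Type*} [MetricSpace M] (hCU : UAFPP C)
    (hW1 : ∀ x y z : X, ∀ l ∈ Icc (0:ℝ) 1,
      dist z (W x y l) ≤ (1 - l) * dist z x + l * dist z y)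
    (hW4 : ∀ x y z w : X, ∀ l ∈ Icc (0:ℝ) 1,
      dist (W x z l) (W y w l) ≤ (1 - l) * dist x y + l * dist z w)
    (hconv : ∀ x ∈ C, ∀ y ∈ C, ∀ l ∈ Icc (0:ℝ) 1, W x y l ∈ C)
    (hx₀ : x₀ ∈ C) (S : M → X → X) (hSC : ∀ u, MapsTo (S u) C C)
    (hS : ∀ u v, ∀ y ∈ C, ∀ z ∈ C, dist (S u y) (S v z) ≤ max (dist y z) (dist u v))
    {b : ℝ} (hb : ∀ u, dist x₀ (S u x₀) ≤ b) {ε : ℝ} (hε : 0 < ε) :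
    ∃ y : M → X, (∀ u, y u ∈ C) ∧ (∀ u v, dist (y u) (y v) ≤ dist u v) ∧
      ∀ u, dist (y u) (S u (y u)) ≤ ε := by
  obtain ⟨δ, hδ, n, hn⟩ := hCU.exists_dist_anchoredIterate_le hW1 hW4 hconv hx₀ b hε
  refine ⟨fun u => anchoredIterate W x₀ δ (S u) n,
    fun u => anchoredIterate_mem hconv hx₀ hδ (hSC u) n,
    fun u v => dist_anchoredIterate_le_of_forall_dist_le hW4 hconv hx₀ hδ (hSC u) (hSC v)
      dist_nonneg (hS u v) n,
    fun u => hn _ (hSC u) (fun y hy z hz => by simpa using hS u u y hy z hz) (hb u)⟩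

end AnchoredIterate

theorem AFPP.exists_dist_lt {M : Type*} [MetricSpace M] [Nonempty M] (hM : AFPP M) {S : M → M}
    (hS : ∀ u v : M, dist (S u) (S v) ≤ dist u v) {ε : ℝ} (hε : 0 < ε) :
    ∃ u, dist u (S u) < ε := by
  have hlt : sInf {r : ℝ | ∃ u : M, r = dist u (S u)} < ε := by rw [hM S hS]; exact hε
  obtain ⟨_, ⟨u, rfl⟩, hu⟩ := exists_lt_of_csInf_lt (by exact ⟨_, Classical.arbitrary M, rfl⟩) hlt
  exact ⟨u, hu⟩

theorem product_AFPP_of_UAFPP_and_bounded_general {X M : Type*} [MetricSpace X] [MetricSpace M]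
    [Nonempty M] (W : X → X → ℝ → X)
    (hW1 : ∀ x y z : X, ∀ l ∈ Set.Icc (0:ℝ) 1,
      dist z (W x y l) ≤ (1 - l) * dist z x + l * dist z y)
    (hW4 : ∀ x y z w : X, ∀ l ∈ Set.Icc (0:ℝ) 1,
      dist (W x z l) (W y w l) ≤ (1 - l) * dist x y + l * dist z w)
    (C : Set X) (hC : C.Nonempty)
    (hconv : ∀ x ∈ C, ∀ y ∈ C, ∀ l ∈ Set.Icc (0:ℝ) 1, W x y l ∈ C)
    (hCU : UAFPP C)
    (hMbdd : ∃ b : ℝ, ∀ u v : M, dist u v ≤ b)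
    (hM : AFPP M) :
    ∀ T : X × M → X × M,
      (∀ x ∈ C, ∀ u : M, (T (x, u)).1 ∈ C) →
      (∀ p q : X × M, p.1 ∈ C → q.1 ∈ C → dist (T p) (T q) ≤ dist p q) →
      sInf {r : ℝ | ∃ x ∈ C, ∃ u : M, r = dist (x, u) (T (x, u))} = 0 := by
  intro T hTC hT
  obtain ⟨x₀, hx₀⟩ := hC
  obtain ⟨diamM, hdiamM⟩ := hMbdd
  let u₀ := Classical.arbitrary M
  have hTdist : ∀ u v, ∀ y ∈ C, ∀ z ∈ C, dist (T (y, u)) (T (z, v)) ≤ max (dist y z) (dist u v) :=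
    fun u v y hy z hz => (hT _ _ hy hz).trans_eq Prod.dist_eq
  have hslice : ∀ u v, ∀ y ∈ C, ∀ z ∈ C,
      dist (T (y, u)).1 (T (z, v)).1 ≤ max (dist y z) (dist u v) :=
    fun u v y hy z hz => ((le_max_left _ _).trans_eq Prod.dist_eq.symm).trans (hTdist u v y hy z hz)
  have hbound : ∀ u, dist x₀ (T (x₀, u)).1 ≤ dist x₀ (T (x₀, u₀)).1 + diamM := fun u =>
    (dist_triangle _ _ _).trans
      (add_le_add_right ((hslice u₀ u x₀ hx₀ x₀ hx₀).trans (by simpa using hdiamM u₀ u)) _)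
  refine csInf_eq_of_forall_ge_of_forall_gt_exists_lt ⟨_, x₀, hx₀, u₀, rfl⟩
    (by rintro _ ⟨x, -, u, rfl⟩; exact dist_nonneg) fun ε hε => ?_
  obtain ⟨y, hyC, hy, hyfix⟩ := hCU.exists_nonexpansive_approxFixedPoints hW1 hW4 hconv hx₀
    (fun u x => (T (x, u)).1) (fun u x hx => hTC x hx u) hslice hbound (half_pos hε)
  obtain ⟨u, hu⟩ := hM.exists_dist_lt (S := fun u => (T (y u, u)).2)
    (fun u v => ((le_max_right _ _).trans_eq Prod.dist_eq.symm).trans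
      ((hTdist u v _ (hyC u) _ (hyC v)).trans (max_le (hy u v) le_rfl)))
    (half_pos hε)
  refine ⟨_, ⟨y u, hyC u, u, rfl⟩, ?_⟩
  rw [Prod.dist_eq]
  exact max_lt ((hyfix u).trans_lt (half_lt_self hε)) (hu.trans (half_lt_self hε))

/-- If C has the UAFPP and M is a bounded metric space with the AFPP, then
(C × M)_∞ has the AFPP for nonexpansive mappings. -/
theorem product_AFPP_of_UAFPP_and_bounded {X M : Type*} [MetricSpace X] [MetricSpace M]
    [Nonempty M] (W : X → X → ℝ → X)
    (hW1 : ∀ x y z : X, ∀ l ∈ Set.Icc (0:ℝ) 1,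
      dist z (W x y l) ≤ (1 - l) * dist z x + l * dist z y)
    (hW2 : ∀ x y : X, ∀ l ∈ Set.Icc (0:ℝ) 1, ∀ l' ∈ Set.Icc (0:ℝ) 1,
      dist (W x y l) (W x y l') = |l - l'| * dist x y)
    (hW3 : ∀ x y : X, ∀ l ∈ Set.Icc (0:ℝ) 1, W x y l = W y x (1 - l))
    (hW4 : ∀ x y z w : X, ∀ l ∈ Set.Icc (0:ℝ) 1,
      dist (W x z l) (W y w l) ≤ (1 - l) * dist x y + l * dist z w)
    (C : Set X) (hC : C.Nonempty)
    (hconv : ∀ x ∈ C, ∀ y ∈ C, ∀ l ∈ Set.Icc (0:ℝ) 1, W x y l ∈ C)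
    (hCU : UAFPP C)
    (hMbdd : ∃ b : ℝ, ∀ u v : M, dist u v ≤ b)
    (hM : AFPP M) :
    ∀ T : X × M → X × M,
      (∀ x ∈ C, ∀ u : M, (T (x, u)).1 ∈ C) →
      (∀ p q : X × M, p.1 ∈ C → q.1 ∈ C → dist (T p) (T q) ≤ dist p q) →
      sInf {r : ℝ | ∃ x ∈ C, ∃ u : M, r = dist (x, u) (T (x, u))} = 0 :=
  product_AFPP_of_UAFPP_and_bounded_general W hW1 hW4 C hC hconv hCU hMbdd hM
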